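/- arXiv:1208.0117 — 3 statements merged into one kernel-verified Lean document; each statement's English description precedes it below -/
import Mathlib

section
/- Let w, z : [0, l] → ℝ be smooth with w'² + z'² ≡ 1, w(0) = 0, z'(0) = 0, and z' ≠ 0 on (0, l]. Then w''/z' extends continuously to φ = 0 with limit equal to the signed curvature k(0) = (w'' z' − z'' w')(0). -/
open Real Set Filter
open scoped ContDiff

/-- For a smooth unit-speed curve `(w, z)` on `[0, l]` with `w(0) = 0`, `z'(0) = 0` and
`z' ≠ 0` on `(0, l]`, the function `w''/z'` extends continuously to `φ = 0` with limit
equal to the signed curvature `k(0) = (w'' z' − z'' w')(0)`. -/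
theorem stmt5 (l : ℝ) (hl : 0 < l) (w z : ℝ → ℝ)
    (hw : ContDiff ℝ (⊤ : ℕ∞) w) (hz : ContDiff ℝ (⊤ : ℕ∞) z)
    (hunit : ∀ t ∈ Icc 0 l, (deriv w t) ^ 2 + (deriv z t) ^ 2 = 1)
    (hw0 : w 0 = 0) (hz'0 : deriv z 0 = 0)
    (hz' : ∀ t ∈ Ioc 0 l, deriv z t ≠ 0) :
    Tendsto (fun t => deriv (deriv w) t / deriv z t) (nhdsWithin 0 (Ioc 0 l))
      (nhds (deriv (deriv w) 0 * deriv z 0 - deriv (deriv z) 0 * deriv w 0)) := by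
  have hw1 : ContDiff ℝ ∞ (deriv w) := (contDiff_infty_iff_deriv.mp (hw.of_le (by simp))).2
  have hz1 : ContDiff ℝ ∞ (deriv z) := (contDiff_infty_iff_deriv.mp (hz.of_le (by simp))).2
  have hw2 : Continuous (deriv (deriv w)) := (contDiff_infty_iff_deriv.mp hw1).2.continuous
  have hz2 : Continuous (deriv (deriv z)) := (contDiff_infty_iff_deriv.mp hz1).2.continuous
  have hdw : Differentiable ℝ (deriv w) := hw1.differentiable (by simp)
  have hdz : Differentiable ℝ (deriv z) := hz1.differentiable (by simp)
  -- w'(0) ≠ 0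
  have hsq : deriv w 0 ^ 2 = 1 := by
    have := hunit 0 ⟨le_refl 0, hl.le⟩
    rw [hz'0] at this; linarith [this]
  have hw'0 : deriv w 0 ≠ 0 := by
    intro h; rw [h] at hsq; norm_num at hsq
  -- on Ioo 0 l, w' w'' + z' z'' = 0
  have key : ∀ t ∈ Ioo (0:ℝ) l, deriv w t * deriv (deriv w) t
      + deriv z t * deriv (deriv z) t = 0 := by
    intro t ht
    have hmem : Ioo (0:ℝ) l ∈ nhds t := isOpen_Ioo.mem_nhds ht
    have heq : (fun s => deriv w s ^ 2 + deriv z s ^ 2) =ᶠ[nhds t] fun _ => (1:ℝ) := by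
      filter_upwards [hmem] with s hs
      exact hunit s ⟨hs.1.le, hs.2.le⟩
    have hd : deriv (fun s => deriv w s ^ 2 + deriv z s ^ 2) t = 0 := by
      rw [heq.deriv_eq, deriv_const]
    rw [deriv_fun_add ((hdw t).fun_pow 2) ((hdz t).fun_pow 2), deriv_fun_pow (hdw t) 2,
      deriv_fun_pow (hdz t) 2] at hd
    norm_num at hd
    nlinarith [hd]
  -- eventual equality with -z''/w'
  have hev : ∀ᶠ t in nhdsWithin (0:ℝ) (Ioc 0 l),
      deriv (deriv w) t / deriv z t = -deriv (deriv z) t / deriv w t := by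
    have h1 : {t : ℝ | deriv w t ≠ 0} ∈ nhds (0:ℝ) :=
      (isOpen_ne.preimage hw1.continuous).mem_nhds hw'0
    have h2 : Iio l ∈ nhds (0:ℝ) := Iio_mem_nhds hl
    filter_upwards [mem_nhdsWithin_of_mem_nhds (inter_mem h1 h2), self_mem_nhdsWithin]
      with t ht hmem
    have hzt := hz' t hmem
    have hwt : deriv w t ≠ 0 := ht.1
    have hk := key t ⟨hmem.1, ht.2⟩
    field_simp
    linarith [hk]
  rw [show deriv (deriv w) 0 * deriv z 0 - deriv (deriv z) 0 * deriv w 0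
      = -deriv (deriv z) 0 / deriv w 0 by rw [hz'0]; field_simp; linear_combination (-deriv (deriv z) 0) * hsq]
  refine Tendsto.congr' (Filter.EventuallyEq.symm hev) ?_
  exact tendsto_nhdsWithin_of_tendsto_nhds
    ((hz2.neg.continuousAt).div (hw1.continuous.continuousAt) hw'0)
end

section
/- If the surface of revolution generated by a unit-speed curve (w, z) with w > 0 on (0,l) has positive Gaussian curvature K₀ = −w''/w > 0, then for any constants a > 0 and f ≥ 1 the rescaled surface (a w cos θ, a w sin θ, a f z) also has positive Gaussian curvature, equal to K₀ f² / (a² D⁴) where D = √(w'² + f² z'²). -/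
open Real Set Filter

noncomputable section

/-- The Gaussian curvature of a rotationally symmetric Riemannian metric
`ds² = E(φ) dφ² + G(φ) dθ²` (the metric induced on a surface of revolution by the
Euclidean metric of `ℝ³`), given by the standard intrinsic formula
`K = −(1/(2√(EG))) (G'/√(EG))'`. -/
def gaussCurvRev (E G : ℝ → ℝ) (t : ℝ) : ℝ :=
  -(1 / (2 * Real.sqrt (E t * G t))) *
    deriv (fun s => deriv G s / Real.sqrt (E s * G s)) t

/-- If the surface of revolution generated by a unit-speed curve `(w, z)` with `w > 0`
on `(0, l)` has positive Gaussian curvature `K₀ = −w''/w > 0`, then for any `a > 0`,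
`f ≥ 1` the rescaled surface `(a w cos θ, a w sin θ, a f z)` — with induced metric
`E = a²(w'² + f² z'²)`, `G = a² w²` — also has positive Gaussian curvature, equal to
`K₀ f² / (a² D⁴)` where `D = √(w'² + f² z'²)`. -/
theorem stmt10 (l a f : ℝ) (hl : 0 < l) (ha : 0 < a) (hf : 1 ≤ f)
    (w z : ℝ → ℝ) (hw : ContDiff ℝ (⊤ : ℕ∞) w) (hz : ContDiff ℝ (⊤ : ℕ∞) z)
    (hunit : ∀ t ∈ Icc 0 l, (deriv w t) ^ 2 + (deriv z t) ^ 2 = 1)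
    (hwpos : ∀ t ∈ Ioo 0 l, 0 < w t)
    (hK0 : ∀ t ∈ Ioo 0 l, 0 < -(deriv (deriv w) t) / w t)
    (D : ℝ → ℝ)
    (hD : D = fun s => Real.sqrt ((deriv w s) ^ 2 + f ^ 2 * (deriv z s) ^ 2))
    (t : ℝ) (ht : t ∈ Ioo 0 l) :
    gaussCurvRev (fun s => a ^ 2 * ((deriv w s) ^ 2 + f ^ 2 * (deriv z s) ^ 2))
          (fun s => a ^ 2 * (w s) ^ 2) t =
        (-(deriv (deriv w) t) / w t) * f ^ 2 / (a ^ 2 * (D t) ^ 4) ∧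
      0 < gaussCurvRev (fun s => a ^ 2 * ((deriv w s) ^ 2 + f ^ 2 * (deriv z s) ^ 2))
          (fun s => a ^ 2 * (w s) ^ 2) t := by
  obtain ⟨ht0, htl⟩ := ht
  have hw2 : ContDiff ℝ ((⊤:ℕ∞):WithTop ℕ∞) w := hw.of_le (by simp)
  have hz2 : ContDiff ℝ ((⊤:ℕ∞):WithTop ℕ∞) z := hz.of_le (by simp)
  have hw' : ContDiff ℝ ((⊤:ℕ∞):WithTop ℕ∞) (deriv w) := (contDiff_infty_iff_deriv.mp hw2).2
  have hz' : ContDiff ℝ ((⊤:ℕ∞):WithTop ℕ∞) (deriv z) := (contDiff_infty_iff_deriv.mp hz2).2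
  have hwd : Differentiable ℝ w := hw.differentiable (by simp)
  have hud : Differentiable ℝ (deriv w) := hw'.differentiable (by norm_num)
  have hvd : Differentiable ℝ (deriv z) := hz'.differentiable (by norm_num)
  have hmem : Ioo 0 l ∈ nhds t := isOpen_Ioo.mem_nhds ⟨ht0, htl⟩
  set A := deriv w t with hA
  set B := deriv z t with hB
  set u' := deriv (deriv w) t with hu'
  set v' := deriv (deriv z) t with hv'
  have hABt : A ^ 2 + B ^ 2 = 1 := hunit t (Ioo_subset_Icc_self ⟨ht0, htl⟩)
  have hEunit : (fun s => deriv w s ^ 2 + deriv z s ^ 2) =ᶠ[nhds t] fun _ => (1:ℝ) := by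
    filter_upwards [hmem] with s hs
    exact hunit s (Ioo_subset_Icc_self hs)
  have h1 : HasDerivAt (fun s => deriv w s ^ 2 + deriv z s ^ 2)
      (2*A*u' + 2*B*v') t := by
    have h := ((hud t).hasDerivAt.pow 2).add ((hvd t).hasDerivAt.pow 2)
    exact h.congr_deriv (by simp; rfl)
  have h2 : HasDerivAt (fun s => deriv w s ^ 2 + deriv z s ^ 2) 0 t :=
    (hasDerivAt_const t (1:ℝ)).congr_of_eventuallyEq hEunit
  have hAB : A * u' + B * v' = 0 := by
    have h := h1.unique h2
    linarith
  have hf2 : (1:ℝ) ≤ f ^ 2 := by nlinarith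
  have hP : (0:ℝ) < A ^ 2 + f ^ 2 * B ^ 2 := by nlinarith [sq_nonneg B]
  have hDt : D t = Real.sqrt (A ^ 2 + f ^ 2 * B ^ 2) := by rw [hD]
  have hDtpos : 0 < D t := by rw [hDt]; exact Real.sqrt_pos.mpr hP
  have hDsq : (D t) ^ 2 = A ^ 2 + f ^ 2 * B ^ 2 := by
    rw [hDt]; exact Real.sq_sqrt hP.le
  have hQ : HasDerivAt (fun s => deriv w s ^ 2 + f ^ 2 * deriv z s ^ 2)
      (2*A*u' + f ^ 2 * (2*B*v')) t := by
    have h := ((hud t).hasDerivAt.pow 2).add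
      (((hvd t).hasDerivAt.pow 2).const_mul (f ^ 2))
    exact h.congr_deriv (by simp; rfl)
  have hvald : (2*A*u' + f ^ 2 * (2*B*v')) / (2 * D t)
      = 1 / (2 * Real.sqrt (A ^ 2 + f ^ 2 * B ^ 2)) * (2*A*u' + f ^ 2 * (2*B*v')) := by
    rw [hDt]; ring
  have hDderiv : HasDerivAt D ((2*A*u' + f ^ 2 * (2*B*v')) / (2 * D t)) t := by
    rw [hvald, hD]
    exact (Real.hasDerivAt_sqrt hP.ne').comp t hQ
  have hwt : 0 < w t := hwpos t ⟨ht0, htl⟩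
  have hDpos : ∀ s ∈ Ioo 0 l, 0 < D s := by
    intro s hs
    have hus := hunit s (Ioo_subset_Icc_self hs)
    have : (0:ℝ) < deriv w s ^ 2 + f ^ 2 * deriv z s ^ 2 := by
      nlinarith [sq_nonneg (deriv z s)]
    rw [hD]; exact Real.sqrt_pos.mpr this
  have hsqrtEG : ∀ s ∈ Ioo 0 l,
      Real.sqrt (a ^ 2 * ((deriv w s) ^ 2 + f ^ 2 * (deriv z s) ^ 2) * (a ^ 2 * (w s) ^ 2))
        = a ^ 2 * w s * D s := by
    intro s hs
    have hws : 0 < w s := hwpos s hs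
    have hDs2 : (D s) ^ 2 = (deriv w s) ^ 2 + f ^ 2 * (deriv z s) ^ 2 := by
      rw [hD]; exact Real.sq_sqrt (by positivity)
    have hDs : 0 < D s := hDpos s hs
    have key : a ^ 2 * ((deriv w s) ^ 2 + f ^ 2 * (deriv z s) ^ 2) * (a ^ 2 * (w s) ^ 2)
        = (a ^ 2 * w s * D s) ^ 2 := by
      linear_combination (a ^ 2 * w s) ^ 2 * hDs2.symm
    rw [key, Real.sqrt_sq (by positivity)]
  have hGd : ∀ s, deriv (fun r => a ^ 2 * (w r) ^ 2) s = a ^ 2 * (2 * w s * deriv w s) := by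
    intro s
    have h := (((hwd s).hasDerivAt).pow 2).const_mul (a ^ 2)
    have := h.deriv
    simpa using this
  have heq : (fun s => deriv (fun r => a ^ 2 * (w r) ^ 2) s /
      Real.sqrt (a ^ 2 * ((deriv w s) ^ 2 + f ^ 2 * (deriv z s) ^ 2) * (a ^ 2 * (w s) ^ 2)))
      =ᶠ[nhds t] fun s => 2 * deriv w s / D s := by
    filter_upwards [hmem] with s hs
    have hws : 0 < w s := hwpos s hs
    have hDs : 0 < D s := hDpos s hs
    rw [hsqrtEG s hs, hGd s]
    field_simp
  have hderiv2 : deriv (fun s => 2 * deriv w s / D s) t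
      = (2*u' * D t - 2*A * ((2*A*u' + f ^ 2 * (2*B*v')) / (2 * D t))) / (D t) ^ 2 := by
    have hnum : HasDerivAt (fun s => 2 * deriv w s) (2*u') t :=
      ((hud t).hasDerivAt).const_mul 2
    exact (hnum.div hDderiv hDtpos.ne').deriv
  have hmain : deriv (fun s => deriv (fun r => a ^ 2 * (w r) ^ 2) s /
      Real.sqrt (a ^ 2 * ((deriv w s) ^ 2 + f ^ 2 * (deriv z s) ^ 2) * (a ^ 2 * (w s) ^ 2))) t
      = 2 * u' * f ^ 2 / (D t) ^ 3 := by
    have hQ'val : 2*A*u' + f ^ 2 * (2*B*v') = 2*A*u'*(1 - f ^ 2) := by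
      linear_combination 2 * f ^ 2 * hAB
    rw [heq.deriv_eq, hderiv2, hQ'val]
    have hX : D t ^ 2 = A ^ 2 - A ^ 2 * f ^ 2 + f ^ 2 := by
      linear_combination hDsq + f ^ 2 * hABt
    field_simp
    linear_combination u' * hX
  have hval : gaussCurvRev (fun s => a ^ 2 * ((deriv w s) ^ 2 + f ^ 2 * (deriv z s) ^ 2))
      (fun s => a ^ 2 * (w s) ^ 2) t
      = (-u' / w t) * f ^ 2 / (a ^ 2 * (D t) ^ 4) := by
    simp only [gaussCurvRev]
    rw [hmain, hsqrtEG t ⟨ht0, htl⟩]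
    field_simp
  refine ⟨hval, ?_⟩
  rw [hval]
  have hK := hK0 t ⟨ht0, htl⟩
  have hf0 : (0:ℝ) < f := lt_of_lt_of_le one_pos hf
  exact div_pos (mul_pos hK (by positivity)) (by positivity)

end
end

section
/- Let C₁ > 0, and let w, z : [0, l] → ℝ be smooth with w'² + z'² ≡ 1, C₁² ≤ w² + z² on [0, l], w ≥ 0, z' < 0 on (0, l), and suppose w/z' extends to a continuous function on [0, l] bounded in absolute value by C. Then for every α ≥ 0, ∫₀ˡ α w / (C₁² + α² z²)² dφ ≤ (C/C₁³) ∫_{-∞}^{∞} dy/(1+y²)² = Cπ/(2C₁³). -/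
open Real Set Filter intervalIntegral

lemma aux_hasDerivAt_frac (v : ℝ) :
    HasDerivAt (fun v : ℝ => v / (1 + v ^ 2)) ((1 - v ^ 2) / (1 + v ^ 2) ^ 2) v := by
  have h1 : (0:ℝ) < 1 + v ^ 2 := by positivity
  have := (hasDerivAt_id v).div (((hasDerivAt_pow 2 v).const_add 1)) (ne_of_gt h1)
  refine this.congr_deriv ?_
  simp only [id]
  field_simp
  ring

lemma aux_hasDerivAt_h (v : ℝ) :
    HasDerivAt (fun v : ℝ => arctan v + v / (1 + v ^ 2)) (2 / (1 + v ^ 2) ^ 2) v := by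
  have h1 : (0:ℝ) < 1 + v ^ 2 := by positivity
  have d1 := Real.hasDerivAt_arctan v
  have := d1.add (aux_hasDerivAt_frac v)
  refine this.congr_deriv ?_
  field_simp
  ring

lemma aux_frac_le_arctan {x : ℝ} (hx : 0 ≤ x) : x / (1 + x ^ 2) ≤ arctan x := by
  set k : ℝ → ℝ := fun x => arctan x - x / (1 + x ^ 2) with hk
  have hder : ∀ y : ℝ, HasDerivAt k (2 * y ^ 2 / (1 + y ^ 2) ^ 2) y := by
    intro y
    have h1 : (0:ℝ) < 1 + y ^ 2 := by positivity
    have := (Real.hasDerivAt_arctan y).sub (aux_hasDerivAt_frac y)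
    refine this.congr_deriv ?_
    field_simp
    ring
  have hmono : Monotone k := by
    apply monotone_of_deriv_nonneg (fun y => (hder y).differentiableAt)
    intro y
    rw [(hder y).deriv]
    positivity
  have := hmono hx
  simpa [hk, Real.arctan_zero] using this

lemma aux_h_abs (v : ℝ) : |arctan v + v / (1 + v ^ 2)| ≤ π / 2 := by
  have key : ∀ x : ℝ, 0 ≤ x → arctan x + x / (1 + x ^ 2) ≤ π / 2 := by
    intro x hx
    rcases hx.eq_or_lt with h | h
    · simp [← h]
      positivity
    · have hinv := Real.arctan_inv_of_pos h
      have heq : x / (1 + x ^ 2) = x⁻¹ / (1 + x⁻¹ ^ 2) := by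
        field_simp
        ring
      have := aux_frac_le_arctan (le_of_lt (inv_pos.mpr h))
      rw [← heq] at this
      linarith
  have keylow : ∀ x : ℝ, 0 ≤ x → 0 ≤ arctan x + x / (1 + x ^ 2) := by
    intro x hx
    have h1 : (0:ℝ) ≤ arctan x := by simpa using Real.arctan_strictMono.monotone hx
    have h2 : (0:ℝ) ≤ x / (1 + x ^ 2) := by positivity
    linarith
  rcases le_or_gt 0 v with hv | hv
  · rw [abs_le]
    constructor
    · have := keylow v hv
      have : (0:ℝ) ≤ π / 2 := by positivity
      linarith [keylow v hv]
    · exact key v hv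
  · have hodd : arctan v + v / (1 + v ^ 2) = -(arctan (-v) + (-v) / (1 + (-v) ^ 2)) := by
      rw [Real.arctan_neg]
      ring_nf
    rw [hodd, abs_neg, abs_le]
    constructor
    · have := keylow (-v) (by linarith)
      have hpi : (0:ℝ) ≤ π / 2 := by positivity
      linarith
    · exact key (-v) (by linarith)

/-- Under the hypotheses on the unit-speed curve `(w, z)` (`C₁² ≤ w² + z²`, `w ≥ 0`,
`z' < 0` on `(0, l)`, `|w/z'| ≤ C`), for every `α ≥ 0` one has
`∫₀ˡ α w / (C₁² + α² z²)² dφ ≤ C π / (2 C₁³)`. -/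
theorem stmt13 (l C₁ C α : ℝ) (hl : 0 < l) (hC₁ : 0 < C₁) (hα : 0 ≤ α)
    (w z : ℝ → ℝ) (hw : ContDiff ℝ (⊤ : ℕ∞) w) (hz : ContDiff ℝ (⊤ : ℕ∞) z)
    (hunit : ∀ t ∈ Icc 0 l, (deriv w t) ^ 2 + (deriv z t) ^ 2 = 1)
    (hlow : ∀ t ∈ Icc 0 l, C₁ ^ 2 ≤ (w t) ^ 2 + (z t) ^ 2)
    (hwpos : ∀ t ∈ Icc 0 l, 0 ≤ w t)
    (hz' : ∀ t ∈ Ioo 0 l, deriv z t < 0)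
    (hbound : ∀ t ∈ Ioo 0 l, |w t / deriv z t| ≤ C) :
    ∫ t in (0 : ℝ)..l, α * w t / (C₁ ^ 2 + α ^ 2 * (z t) ^ 2) ^ 2 ≤
      C * Real.pi / (2 * C₁ ^ 3) := by
  -- C is nonnegative
  have hmid : l / 2 ∈ Ioo (0:ℝ) l := ⟨by linarith, by linarith⟩
  have hC : 0 ≤ C := le_trans (abs_nonneg _) (hbound _ hmid)
  have hC₁3 : (0:ℝ) < C₁ ^ 3 := by positivity
  have hC₁ne : C₁ ≠ 0 := ne_of_gt hC₁
  -- continuity facts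
  have hzc : Continuous z := hz.continuous
  have hwc : Continuous w := hw.continuous
  have hz'c : Continuous (deriv z) := hz.continuous_deriv (by simp)
  have hzd : ∀ t, HasDerivAt z (deriv z t) t :=
    fun t => (hz.differentiable (by simp) t).hasDerivAt
  -- denominator
  set D : ℝ → ℝ := fun t => (C₁ ^ 2 + α ^ 2 * (z t) ^ 2) ^ 2 with hD
  have hDpos : ∀ t, 0 < D t := fun t => by positivity
  have hDc : Continuous D := by continuity
  -- the antiderivative
  set h : ℝ → ℝ := fun v => arctan v + v / (1 + v ^ 2) with hh
  set F : ℝ → ℝ := fun t => C / (2 * C₁ ^ 3) * h (α * z t / C₁) with hF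
  have hF' : ∀ t, HasDerivAt F (C * α * deriv z t / D t) t := by
    intro t
    have hin : HasDerivAt (fun t => α * z t / C₁) (α * deriv z t / C₁) t := by
      simpa [mul_div_assoc] using ((hzd t).const_mul α).div_const C₁
    have := ((aux_hasDerivAt_h (α * z t / C₁)).comp t hin).const_mul (C / (2 * C₁ ^ 3))
    refine this.congr_deriv ?_
    have h1 : (0:ℝ) < 1 + (α * z t / C₁) ^ 2 := by positivity
    simp only [hD]
    field_simp
  have hF'c : Continuous (fun t => C * α * deriv z t / D t) :=
    ((continuous_const.mul hz'c)).div hDc (fun t => ne_of_gt (hDpos t))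
  have hfc : Continuous (fun t => α * w t / D t) :=
    (continuous_const.mul hwc).div hDc (fun t => ne_of_gt (hDpos t))
  -- pointwise inequality on Icc
  have key : ∀ t ∈ Icc (0:ℝ) l, α * w t / D t ≤ -(C * α * deriv z t / D t) := by
    have hIoo : ∀ t ∈ Ioo (0:ℝ) l,
        α * w t / D t + C * α * deriv z t / D t ≤ 0 := by
      intro t ht
      have hzt := hz' t ht
      have hwt := hwpos t (Ioo_subset_Icc_self ht)
      have hb := hbound t ht
      rw [abs_div, abs_of_nonneg hwt, abs_of_neg hzt] at hb
      have hwle : w t ≤ C * (-deriv z t) := by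
        rw [div_le_iff₀ (by linarith : (0:ℝ) < -deriv z t)] at hb
        linarith
      have hnum : α * w t + C * α * deriv z t ≤ 0 := by nlinarith
      have := div_nonpos_of_nonpos_of_nonneg hnum (le_of_lt (hDpos t))
      rw [add_div] at this
      exact this
    have hcl : Continuous (fun t => α * w t / D t + C * α * deriv z t / D t) :=
      hfc.add hF'c
    have hsub : Ioo (0:ℝ) l ⊆ {t | α * w t / D t + C * α * deriv z t / D t ≤ 0} :=
      fun t ht => hIoo t ht
    have hclosed : IsClosed {t | α * w t / D t + C * α * deriv z t / D t ≤ 0} :=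
      isClosed_le hcl continuous_const
    have := closure_minimal hsub hclosed
    rw [closure_Ioo (ne_of_lt hl)] at this
    intro t ht
    have := this ht
    simp only [mem_setOf_eq] at this
    linarith
  -- the integral comparison
  have hint1 : IntervalIntegrable (fun t => α * w t / D t) MeasureTheory.volume 0 l :=
    hfc.intervalIntegrable 0 l
  have hint2 : IntervalIntegrable (fun t => -(C * α * deriv z t / D t))
      MeasureTheory.volume 0 l := (hF'c.neg).intervalIntegrable 0 l
  calc ∫ t in (0:ℝ)..l, α * w t / (C₁ ^ 2 + α ^ 2 * (z t) ^ 2) ^ 2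
      = ∫ t in (0:ℝ)..l, α * w t / D t := rfl
    _ ≤ ∫ t in (0:ℝ)..l, -(C * α * deriv z t / D t) :=
        intervalIntegral.integral_mono_on (le_of_lt hl) hint1 hint2 key
    _ = -(F l - F 0) := by
        rw [intervalIntegral.integral_neg,
          intervalIntegral.integral_eq_sub_of_hasDerivAt
            (fun t _ => hF' t) (hF'c.intervalIntegrable 0 l)]
    _ ≤ C * Real.pi / (2 * C₁ ^ 3) := by
        have h0 := aux_h_abs (α * z 0 / C₁)
        have h1 := aux_h_abs (α * z l / C₁)
        rw [abs_le] at h0 h1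
        have hfac : (0:ℝ) ≤ C / (2 * C₁ ^ 3) := by positivity
        have hdiff : h (α * z 0 / C₁) - h (α * z l / C₁) ≤ π := by
          simp only [hh]
          linarith [h0.2, h1.1]
        have : -(F l - F 0) = C / (2 * C₁ ^ 3) * (h (α * z 0 / C₁) - h (α * z l / C₁)) := by
          simp only [hF]; ring
        rw [this]
        calc C / (2 * C₁ ^ 3) * (h (α * z 0 / C₁) - h (α * z l / C₁))
            ≤ C / (2 * C₁ ^ 3) * π := mul_le_mul_of_nonneg_left hdiff hfac
          _ = C * Real.pi / (2 * C₁ ^ 3) := by ring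
end
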